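/- Suppose |β| ∼ ⟨ξ⟩ where ξ = (ξ₁,ξ₂), |ξ₂| ≳ ⟨ξ₁⟩, and M ≥ 2. Then the kernel K_{ξ₁}(ξ₂,β) = χ_{|β|∼⟨ξ⟩} · ||β|−⟨ξ₁⟩|^{1/4} ⟨ξ⟩^{−1/4} ⟨|β|−⟨ξ⟩⟩^{−M} satisfies sup_{ξ₁,ξ₂} ∫ K dβ ≲ 1 and sup_{ξ₁,β} ∫ K dξ₂ ≲ 1. -/
import Mathlib


open MeasureTheory

noncomputable def jb (x : ℝ) : ℝ := Real.sqrt (1 + x ^ 2)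

noncomputable def jb2 (ξ : ℝ × ℝ) : ℝ := Real.sqrt (1 + ξ.1 ^ 2 + ξ.2 ^ 2)

/-- The kernel `K_{ξ₁}(ξ₂,β) = χ_{|β|∼⟨ξ⟩} ||β|−⟨ξ₁⟩|^{1/4} ⟨ξ⟩^{−1/4} ⟨|β|−⟨ξ⟩⟩^{−M}`. -/
noncomputable def Kker (M ξ₁ ξ₂ β : ℝ) : ℝ :=
  (if jb2 (ξ₁, ξ₂) / 2 ≤ |β| ∧ |β| ≤ 2 * jb2 (ξ₁, ξ₂) then 1 else 0) *
    |(|β| - jb ξ₁)| ^ ((1 : ℝ) / 4) * (jb2 (ξ₁, ξ₂)) ^ (-(1 : ℝ) / 4) *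
    (jb (|β| - jb2 (ξ₁, ξ₂))) ^ (-M)

open Real in
/-- The basic integral bound: `∫ (1 + ((|x| - a)/c)²)⁻¹ dx ≤ 2πc`. -/
lemma intA (a c : ℝ) (hc : 0 < c) :
    Integrable (fun x : ℝ => (1 + ((|x| - a) / c) ^ 2)⁻¹) ∧
    (∫ x : ℝ, (1 + ((|x| - a) / c) ^ 2)⁻¹) ≤ 2 * π * c := by
  set f : ℝ → ℝ := fun u => (1 + (u / c) ^ 2)⁻¹ with hf
  have hf_int : Integrable f := integrable_inv_one_add_sq.comp_div hc.ne'
  have hf_val : (∫ u : ℝ, f u) = c * π := by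
    have := MeasureTheory.Measure.integral_comp_div (fun u : ℝ => (1 + u ^ 2)⁻¹) c
    rw [hf, this, integral_univ_inv_one_add_sq, abs_of_pos hc, smul_eq_mul]
  have h1 : Integrable (fun x : ℝ => f (x - a)) := hf_int.comp_sub_right a
  have h2 : Integrable (fun x : ℝ => f (x + a)) := hf_int.comp_add_right a
  have hbound : ∀ x : ℝ, (1 + ((|x| - a) / c) ^ 2)⁻¹ ≤ f (x - a) + f (x + a) := by
    intro x
    rcases le_or_gt 0 x with hx | hx
    · rw [abs_of_nonneg hx]
      have : (0:ℝ) ≤ f (x + a) := by positivity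
      simp only [hf]; linarith
    · rw [abs_of_neg hx]
      have he : ((-x - a) / c) ^ 2 = ((x + a) / c) ^ 2 := by ring
      have : (0:ℝ) ≤ f (x - a) := by positivity
      simp only [hf, he]; linarith
  have hcont : Continuous (fun x : ℝ => (1 + ((|x| - a) / c) ^ 2)⁻¹) := by
    apply Continuous.inv₀
    · fun_prop
    · intro x; positivity
  have h_int : Integrable (fun x : ℝ => (1 + ((|x| - a) / c) ^ 2)⁻¹) := by
    refine (h1.add h2).mono hcont.aestronglyMeasurable (ae_of_all _ fun x => ?_)
    have hnn : (0:ℝ) ≤ (1 + ((|x| - a) / c) ^ 2)⁻¹ := by positivity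
    rw [Real.norm_eq_abs, abs_of_nonneg hnn]
    calc (1 + ((|x| - a) / c) ^ 2)⁻¹ ≤ f (x - a) + f (x + a) := hbound x
      _ ≤ ‖((fun x => f (x - a)) + fun x => f (x + a)) x‖ := by
          simp only [Pi.add_apply, Real.norm_eq_abs]; exact le_abs_self _
  refine ⟨h_int, ?_⟩
  calc (∫ x : ℝ, (1 + ((|x| - a) / c) ^ 2)⁻¹)
      ≤ ∫ x : ℝ, (f (x - a) + f (x + a)) := integral_mono h_int (h1.add h2) hbound
    _ = (∫ x : ℝ, f (x - a)) + ∫ x : ℝ, f (x + a) := integral_add h1 h2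
    _ = (∫ u : ℝ, f u) + ∫ u : ℝ, f u := by
        rw [integral_sub_right_eq_self, integral_add_right_eq_self]
    _ = 2 * π * c := by rw [hf_val]; ring

lemma one_le_jb (x : ℝ) : 1 ≤ jb x := by
  rw [jb]
  nlinarith [Real.sq_sqrt (show (0:ℝ) ≤ 1 + x ^ 2 by positivity),
    Real.sqrt_nonneg (1 + x ^ 2)]

lemma jb_sq (x : ℝ) : jb x ^ 2 = 1 + x ^ 2 := Real.sq_sqrt (by positivity)

lemma one_le_jb2 (ξ : ℝ × ℝ) : 1 ≤ jb2 ξ := by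
  rw [jb2]
  nlinarith [Real.sq_sqrt (show (0:ℝ) ≤ 1 + ξ.1 ^ 2 + ξ.2 ^ 2 by positivity),
    Real.sqrt_nonneg (1 + ξ.1 ^ 2 + ξ.2 ^ 2)]

lemma jb2_sq (ξ : ℝ × ℝ) : jb2 ξ ^ 2 = 1 + ξ.1 ^ 2 + ξ.2 ^ 2 := Real.sq_sqrt (by positivity)

lemma jb_le_jb2 (ξ₁ ξ₂ : ℝ) : jb ξ₁ ≤ jb2 (ξ₁, ξ₂) :=
  Real.sqrt_le_sqrt (by nlinarith)

lemma jb_pos (x : ℝ) : 0 < jb x := lt_of_lt_of_le one_pos (one_le_jb x)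
lemma jb2_pos (ξ : ℝ × ℝ) : 0 < jb2 ξ := lt_of_lt_of_le one_pos (one_le_jb2 ξ)

/-- decay factor bound -/
lemma decay_le (M u : ℝ) (hM : 2 ≤ M) : jb u ^ (-M) ≤ (1 + u ^ 2)⁻¹ := by
  have h1 : jb u ^ (-M) ≤ jb u ^ (-(2:ℝ)) :=
    Real.rpow_le_rpow_of_exponent_le (one_le_jb u) (by linarith)
  have h2 : jb u ^ (-(2:ℝ)) = (1 + u ^ 2)⁻¹ := by
    rw [Real.rpow_neg (jb_pos u).le, show ((2:ℝ)) = ((2:ℕ):ℝ) by norm_num,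
      Real.rpow_natCast, jb_sq]
  rw [h2] at h1; exact h1

/-- middle factor bound, on the support -/
lemma mid_le (ξ₁ ξ₂ β : ℝ) (hβ : |β| ≤ 2 * jb2 (ξ₁, ξ₂)) :
    |(|β| - jb ξ₁)| ^ ((1 : ℝ) / 4) * (jb2 (ξ₁, ξ₂)) ^ (-(1 : ℝ) / 4) ≤ 3 ^ ((1:ℝ)/4) := by
  set X := jb2 (ξ₁, ξ₂) with hX
  have hXpos : 0 < X := jb2_pos _
  have h1 : |(|β| - jb ξ₁)| ≤ 3 * X := by
    have := abs_sub (|β|) (jb ξ₁)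
    have h2 := jb_le_jb2 ξ₁ ξ₂
    have h3 := (jb_pos ξ₁).le
    rw [abs_abs, abs_of_nonneg h3] at this
    linarith
  have h4 : |(|β| - jb ξ₁)| ^ ((1:ℝ)/4) ≤ (3 * X) ^ ((1:ℝ)/4) :=
    Real.rpow_le_rpow (abs_nonneg _) h1 (by norm_num)
  have h5 : (3 * X) ^ ((1:ℝ)/4) = 3 ^ ((1:ℝ)/4) * X ^ ((1:ℝ)/4) :=
    Real.mul_rpow (by norm_num) hXpos.le
  calc |(|β| - jb ξ₁)| ^ ((1:ℝ)/4) * X ^ (-(1:ℝ)/4)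
      ≤ (3 ^ ((1:ℝ)/4) * X ^ ((1:ℝ)/4)) * X ^ (-(1:ℝ)/4) := by
        refine mul_le_mul_of_nonneg_right (h5 ▸ h4) ?_
        exact Real.rpow_nonneg hXpos.le _
    _ = 3 ^ ((1:ℝ)/4) * X ^ ((1:ℝ)/4 + -(1:ℝ)/4) := by
        rw [mul_assoc, ← Real.rpow_add hXpos]
    _ = 3 ^ ((1:ℝ)/4) := by norm_num

lemma Kker_nonneg (M ξ₁ ξ₂ β : ℝ) : 0 ≤ Kker M ξ₁ ξ₂ β := by
  unfold Kker
  have h1 : (0:ℝ) ≤ if jb2 (ξ₁, ξ₂) / 2 ≤ |β| ∧ |β| ≤ 2 * jb2 (ξ₁, ξ₂) then 1 else 0 := by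
    split <;> norm_num
  refine mul_nonneg (mul_nonneg (mul_nonneg h1 ?_) ?_) ?_
  · exact Real.rpow_nonneg (abs_nonneg _) _
  · exact Real.rpow_nonneg (jb2_pos _).le _
  · exact Real.rpow_nonneg (jb_pos _).le _

/-- pointwise bound, case 1 -/
lemma Kker_le1 (M ξ₁ ξ₂ β : ℝ) (hM : 2 ≤ M) :
    Kker M ξ₁ ξ₂ β ≤ 3 ^ ((1:ℝ)/4) * (1 + (|β| - jb2 (ξ₁, ξ₂)) ^ 2)⁻¹ := by
  unfold Kker
  split
  · next h =>
    rw [one_mul]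
    exact mul_le_mul (mid_le ξ₁ ξ₂ β h.2) (decay_le M _ hM)
      (Real.rpow_nonneg (jb_pos _).le _) (by positivity)
  · next h =>
    rw [zero_mul, zero_mul, zero_mul]
    positivity

/-- pointwise bound, case 2 -/
lemma Kker_le2 (M ξ₁ ξ₂ β : ℝ) (hM : 2 ≤ M) (hS : jb ξ₁ ≤ 2 * |ξ₂|) :
    Kker M ξ₁ ξ₂ β ≤ 3 ^ ((1:ℝ)/4) *
      (1 + ((|ξ₂| - Real.sqrt (max (|β| ^ 2 - jb ξ₁ ^ 2) 0)) / (3 * Real.sqrt 5)) ^ 2)⁻¹ := by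
  set a := Real.sqrt (max (|β| ^ 2 - jb ξ₁ ^ 2) 0) with hadef
  set c : ℝ := 3 * Real.sqrt 5 with hcdef
  have hs5 : (0:ℝ) < Real.sqrt 5 := Real.sqrt_pos.2 (by norm_num)
  have hc : 0 < c := by positivity
  have ha_nonneg : 0 ≤ a := Real.sqrt_nonneg _
  unfold Kker
  split
  · next h =>
    obtain ⟨h1, h2⟩ := h
    set X := jb2 (ξ₁, ξ₂) with hXdef
    set b := |β| with hbdef
    have hXpos : 0 < X := jb2_pos _
    have hbnn : 0 ≤ b := abs_nonneg _
    have ha2 : a ^ 2 = max (b ^ 2 - jb ξ₁ ^ 2) 0 := Real.sq_sqrt (le_max_right _ _)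
    have hXsq : X ^ 2 = jb ξ₁ ^ 2 + ξ₂ ^ 2 := by rw [jb2_sq, jb_sq]
    have hξ2pos : 0 < |ξ₂| := by have := one_le_jb ξ₁; linarith
    -- key inequality
    have habs : |ξ₂ ^ 2 - a ^ 2| ≤ |X ^ 2 - b ^ 2| := by
      rcases le_or_gt (jb ξ₁ ^ 2) (b ^ 2) with hc1 | hc1
      · have he : a ^ 2 = b ^ 2 - jb ξ₁ ^ 2 := by
          rw [ha2, max_eq_left (by linarith)]
        have : X ^ 2 - b ^ 2 = ξ₂ ^ 2 - a ^ 2 := by rw [hXsq, he]; ring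
        rw [this]
      · have ha0 : a ^ 2 = 0 := by rw [ha2, max_eq_right (by nlinarith)]
        have h3 : (0:ℝ) ≤ ξ₂ ^ 2 - a ^ 2 := by rw [ha0]; simpa using sq_nonneg ξ₂
        have h4 : (0:ℝ) ≤ X ^ 2 - b ^ 2 := by nlinarith
        rw [abs_of_nonneg h3, abs_of_nonneg h4]
        nlinarith
    have hfac1 : |(|ξ₂| - a)| * |ξ₂| ≤ |ξ₂ ^ 2 - a ^ 2| := by
      have : ξ₂ ^ 2 - a ^ 2 = (|ξ₂| - a) * (|ξ₂| + a) := by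
        rw [← sq_abs ξ₂]; ring
      rw [this, abs_mul, abs_of_nonneg (add_nonneg (abs_nonneg _) ha_nonneg)]
      have : |ξ₂| ≤ |ξ₂| + a := by linarith
      exact mul_le_mul_of_nonneg_left this (abs_nonneg _)
    have hfac2 : |X ^ 2 - b ^ 2| = |b - X| * (X + b) := by
      have : X ^ 2 - b ^ 2 = (X - b) * (X + b) := by ring
      rw [this, abs_mul, abs_of_nonneg (by positivity : (0:ℝ) ≤ X + b), abs_sub_comm]
    have hXle : X ≤ Real.sqrt 5 * |ξ₂| := by
      have hj : jb ξ₁ ^ 2 ≤ 4 * ξ₂ ^ 2 := by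
        have := (jb_pos ξ₁).le
        nlinarith [sq_abs ξ₂]
      nlinarith [Real.sq_sqrt (show (0:ℝ) ≤ 5 by norm_num), sq_abs ξ₂,
        mul_nonneg hs5.le (abs_nonneg ξ₂)]
    have hkey : |(|ξ₂| - a)| ≤ c * |b - X| := by
      have hchain : |(|ξ₂| - a)| * |ξ₂| ≤ (c * |b - X|) * |ξ₂| := by
        calc |(|ξ₂| - a)| * |ξ₂| ≤ |X ^ 2 - b ^ 2| := le_trans hfac1 habs
          _ = |b - X| * (X + b) := hfac2
          _ ≤ |b - X| * (c * |ξ₂|) := by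
              refine mul_le_mul_of_nonneg_left ?_ (abs_nonneg _)
              rw [hcdef]
              calc X + b ≤ 3 * X := by linarith
                _ ≤ 3 * (Real.sqrt 5 * |ξ₂|) := by linarith
                _ = 3 * Real.sqrt 5 * |ξ₂| := by ring
          _ = (c * |b - X|) * |ξ₂| := by ring
      exact le_of_mul_le_mul_right hchain hξ2pos
    have hsq : ((|ξ₂| - a) / c) ^ 2 ≤ (b - X) ^ 2 := by
      rw [div_pow, div_le_iff₀ (by positivity)]
      have := mul_self_le_mul_self (abs_nonneg (|ξ₂| - a)) hkey
      calc (|ξ₂| - a) ^ 2 = |(|ξ₂| - a)| * |(|ξ₂| - a)| := by rw [← abs_mul, abs_mul_self]; ring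
        _ ≤ (c * |b - X|) * (c * |b - X|) := this
        _ = (b - X) ^ 2 * c ^ 2 := by
            rw [show (c * |b - X|) * (c * |b - X|) = (|b - X| * |b - X|) * c ^ 2 by ring,
              ← abs_mul, abs_mul_self]; ring
    have hdecay : jb (b - X) ^ (-M) ≤ (1 + ((|ξ₂| - a) / c) ^ 2)⁻¹ := by
      refine le_trans (decay_le M _ hM) ?_
      exact inv_anti₀ (by positivity) (by linarith)
    rw [one_mul]
    exact mul_le_mul (mid_le ξ₁ ξ₂ β h2) hdecay
      (Real.rpow_nonneg (jb_pos _).le _) (by positivity)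
  · next h =>
    rw [zero_mul, zero_mul, zero_mul]
    have h9 : (0:ℝ) ≤ (1 + ((|ξ₂| - a) / c) ^ 2)⁻¹ := inv_nonneg.2 (by positivity)
    exact mul_nonneg (Real.rpow_nonneg (by norm_num) _) h9

lemma meas_beta (M ξ₁ ξ₂ : ℝ) : Measurable (fun β : ℝ => Kker M ξ₁ ξ₂ β) := by
  unfold Kker jb jb2
  refine Measurable.mul (Measurable.mul (Measurable.mul ?_ (by fun_prop)) (by fun_prop))
    (by fun_prop)
  refine Measurable.ite ?_ measurable_const measurable_const
  exact MeasurableSet.inter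
    (measurableSet_le measurable_const measurable_abs)
    (measurableSet_le measurable_abs measurable_const)

lemma meas_xi2 (M ξ₁ β : ℝ) : Measurable (fun ξ₂ : ℝ => Kker M ξ₁ ξ₂ β) := by
  unfold Kker jb jb2
  refine Measurable.mul (Measurable.mul (Measurable.mul ?_ (by fun_prop)) (by fun_prop))
    (by fun_prop)
  refine Measurable.ite ?_ measurable_const measurable_const
  refine MeasurableSet.inter ?_ ?_
  · show MeasurableSet {a : ℝ | Real.sqrt (1 + ξ₁ ^ 2 + a ^ 2) / 2 ≤ |β|}
    apply measurableSet_le <;> fun_prop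
  · show MeasurableSet {a : ℝ | |β| ≤ 2 * Real.sqrt (1 + ξ₁ ^ 2 + a ^ 2)}
    apply measurableSet_le <;> fun_prop

theorem stmt13 (M : ℝ) (hM : 2 ≤ M) :
    ∃ C > 0,
      (∀ ξ₁ ξ₂ : ℝ, jb ξ₁ ≤ 2 * |ξ₂| → (∫ β : ℝ, Kker M ξ₁ ξ₂ β) ≤ C) ∧
      (∀ ξ₁ β : ℝ, (∫ ξ₂ in {ξ₂ : ℝ | jb ξ₁ ≤ 2 * |ξ₂|}, Kker M ξ₁ ξ₂ β) ≤ C) := by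
  have hs5 : (0:ℝ) < Real.sqrt 5 := Real.sqrt_pos.2 (by norm_num)
  have hs5_one : (1:ℝ) ≤ Real.sqrt 5 := by
    nlinarith [Real.sq_sqrt (show (0:ℝ) ≤ 5 by norm_num)]
  have hpi := Real.pi_pos
  refine ⟨3 ^ ((1:ℝ)/4) * (2 * Real.pi * (3 * Real.sqrt 5)), by positivity, ?_, ?_⟩
  · intro ξ₁ ξ₂ _
    set X := jb2 (ξ₁, ξ₂) with hXdef
    obtain ⟨hint, hval⟩ := intA X 1 one_pos
    simp only [div_one] at hint hval
    have hg_int : Integrable (fun β : ℝ => 3 ^ ((1:ℝ)/4) * (1 + (|β| - X) ^ 2)⁻¹) :=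
      hint.const_mul _
    have hK_int : Integrable (fun β : ℝ => Kker M ξ₁ ξ₂ β) := by
      refine hg_int.mono (meas_beta M ξ₁ ξ₂).aestronglyMeasurable (ae_of_all _ fun β => ?_)
      rw [Real.norm_eq_abs, abs_of_nonneg (Kker_nonneg M ξ₁ ξ₂ β)]
      exact le_trans (Kker_le1 M ξ₁ ξ₂ β hM) (le_abs_self _)
    calc (∫ β : ℝ, Kker M ξ₁ ξ₂ β)
        ≤ ∫ β : ℝ, 3 ^ ((1:ℝ)/4) * (1 + (|β| - X) ^ 2)⁻¹ :=
          integral_mono hK_int hg_int (fun β => Kker_le1 M ξ₁ ξ₂ β hM)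
      _ = 3 ^ ((1:ℝ)/4) * ∫ β : ℝ, (1 + (|β| - X) ^ 2)⁻¹ := integral_const_mul _ _
      _ ≤ 3 ^ ((1:ℝ)/4) * (2 * Real.pi * 1) := by
          refine mul_le_mul_of_nonneg_left hval (Real.rpow_nonneg (by norm_num) _)
      _ ≤ 3 ^ ((1:ℝ)/4) * (2 * Real.pi * (3 * Real.sqrt 5)) := by
          refine mul_le_mul_of_nonneg_left ?_ (Real.rpow_nonneg (by norm_num) _)
          have : (1:ℝ) ≤ 3 * Real.sqrt 5 := by linarith
          nlinarith
  · intro ξ₁ β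
    set a := Real.sqrt (max (|β| ^ 2 - jb ξ₁ ^ 2) 0) with hadef
    set c : ℝ := 3 * Real.sqrt 5 with hcdef
    have hc : 0 < c := by positivity
    obtain ⟨hint, hval⟩ := intA a c hc
    have hg_int : Integrable (fun ξ₂ : ℝ => 3 ^ ((1:ℝ)/4) * (1 + ((|ξ₂| - a) / c) ^ 2)⁻¹) :=
      hint.const_mul _
    have hSm : MeasurableSet {ξ₂ : ℝ | jb ξ₁ ≤ 2 * |ξ₂|} :=
      measurableSet_le measurable_const (measurable_abs.const_mul 2)
    have hKS : IntegrableOn (fun ξ₂ : ℝ => Kker M ξ₁ ξ₂ β) {ξ₂ : ℝ | jb ξ₁ ≤ 2 * |ξ₂|} := by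
      refine Integrable.mono hg_int.integrableOn
        ((meas_xi2 M ξ₁ β).aestronglyMeasurable.restrict) ?_
      refine (ae_restrict_iff' hSm).2 (ae_of_all _ fun ξ₂ hξ₂ => ?_)
      rw [Real.norm_eq_abs, abs_of_nonneg (Kker_nonneg M ξ₁ ξ₂ β)]
      exact le_trans (Kker_le2 M ξ₁ ξ₂ β hM hξ₂) (le_abs_self _)
    calc (∫ ξ₂ in {ξ₂ : ℝ | jb ξ₁ ≤ 2 * |ξ₂|}, Kker M ξ₁ ξ₂ β)
        ≤ ∫ ξ₂ in {ξ₂ : ℝ | jb ξ₁ ≤ 2 * |ξ₂|},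
            3 ^ ((1:ℝ)/4) * (1 + ((|ξ₂| - a) / c) ^ 2)⁻¹ :=
          setIntegral_mono_on hKS hg_int.integrableOn hSm
            (fun ξ₂ hξ₂ => Kker_le2 M ξ₁ ξ₂ β hM hξ₂)
      _ ≤ ∫ ξ₂ : ℝ, 3 ^ ((1:ℝ)/4) * (1 + ((|ξ₂| - a) / c) ^ 2)⁻¹ :=
          setIntegral_le_integral hg_int (ae_of_all _ fun ξ₂ => by positivity)
      _ = 3 ^ ((1:ℝ)/4) * ∫ ξ₂ : ℝ, (1 + ((|ξ₂| - a) / c) ^ 2)⁻¹ := integral_const_mul _ _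
      _ ≤ 3 ^ ((1:ℝ)/4) * (2 * Real.pi * (3 * Real.sqrt 5)) := by
          rw [← hcdef]
          exact mul_le_mul_of_nonneg_left hval (Real.rpow_nonneg (by norm_num) _)
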